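/- Let n ≥ 1 and ℓ ≥ 1 be natural numbers, and let S, T, U, V ∈ ℚ[X] be polynomials each of degree at most n − 1, satisfying n!·( n·s_{n−1} + u_{n−1} ) = 1, where s_{n−1} and u_{n−1} are the coefficients of X^{n−1} in S and U respectively. Then for every natural number d ≥ ℓn + 1, ∑_{j=1}^{n} (−1)^{j−1} C(n,j) C(n + d − jℓ, n) + n²ℓ·(∇^{n−1}_ℓ S)(d − ℓ) + nℓ·(∇^{n−1}_ℓ U)(d − ℓ) + (dn + 1)·(∇^n_ℓ S)(d) + (∇^n_ℓ T)(d) + (d + 1)·(∇^n_ℓ U)(d) + (n + 1)·(∇^n_ℓ V)(d) = C(n + d, n), as an identity of rational numbers. -/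

import Mathlib

open Polynomial

/-- The `i`-th backward difference of `f ∈ ℚ[X]` with step `ℓ` at `x`:
`(∇^i_ℓ f)(x) = ∑_{j=0}^{i} (-1)^j C(i,j) f(x − jℓ)`. -/
noncomputable def nabla (ℓ : ℕ) (f : Polynomial ℚ) (i : ℕ) (x : ℚ) : ℚ :=
  ∑ j ∈ Finset.range (i + 1), (-1 : ℚ) ^ j * (i.choose j : ℚ) * f.eval (x - (j : ℚ) * (ℓ : ℚ))

/-!
The `m`-th difference with step `ℓ` of a polynomial of degree at most `m` is the constant
`m! ℓ^m` times its `X^m`-coefficient. Hence the `n`-th differences of `S, T, U, V` vanish, and the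
two `(n-1)`-th differences contribute `ℓ^n · n!(n s_{n-1} + u_{n-1}) = ℓ^n`. Since `n + d - jℓ ≥ 0`
for `j ≤ n`, the binomial sum is `C(n+d, n) - (∇^n_ℓ B)(n+d)` with `B = x(x-1)⋯(x-n+1)/n!`,
and this difference is `ℓ^n`.
-/

open Finset Nat fwdDiff

namespace Polynomial

variable {R : Type*} [CommRing R]

theorem coeff_taylor_of_natDegree_le {f : R[X]} {m : ℕ} (hf : f.natDegree ≤ m) (r : R) :
    (taylor r f).coeff m = f.coeff m := by
  have hconst : (hasseDeriv m f).natDegree ≤ 0 :=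
    (natDegree_hasseDeriv_le f m).trans (by omega)
  rw [taylor_coeff, eq_C_of_natDegree_le_zero hconst, eval_C, hasseDeriv_coeff, zero_add,
    Nat.choose_self, Nat.cast_one, one_mul]

theorem fwdDiff_iter_one_eval_of_natDegree_le {P : R[X]} {m : ℕ} (hP : P.natDegree ≤ m) (x : R) :
    (Δ_[1])^[m] P.eval x = m ! * P.coeff m := by
  rcases hP.lt_or_eq with hlt | rfl
  · simp [fwdDiff_iter_eq_zero_of_degree_lt hlt, coeff_eq_zero_of_natDegree_lt hlt]
  · rw [fwdDiff_iter_degree_eq_factorial, Pi.smul_apply, smul_eq_mul, mul_comm]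
    rfl

/-- The substitution `t ↦ y + h t` turns differences of step `h` at `y` into differences of
step `1` at `0`. -/
theorem fwdDiff_iter_eval_of_natDegree_le {P : R[X]} {m : ℕ} (hP : P.natDegree ≤ m) (h y : R) :
    (Δ_[h])^[m] P.eval y = m ! * h ^ m * P.coeff m := by
  set Q := (taylor y P).comp (C h * X)
  have hQ : Q.natDegree ≤ m := natDegree_comp_le.trans <| by
    simpa [natDegree_taylor] using
      Nat.mul_le_mul hP ((natDegree_C_mul_le h X).trans natDegree_X_le)
  have hshift : (Δ_[h])^[m] P.eval y = (Δ_[1])^[m] Q.eval 0 := by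
    simp only [fwdDiff_iter_eq_sum_shift, Q, eval_comp, taylor_eval]
    refine sum_congr rfl fun k _ => ?_
    rw [nsmul_eq_mul, nsmul_eq_mul, eval_mul, eval_C, eval_X, zero_add, mul_one, add_comm,
      mul_comm h]
  rw [hshift, fwdDiff_iter_one_eval_of_natDegree_le hQ, comp_C_mul_X_coeff,
    coeff_taylor_of_natDegree_le hP, mul_assoc]
  ring

end Polynomial

theorem nabla_eq_fwdDiff_iter (ℓ : ℕ) (f : ℚ[X]) (i : ℕ) (x : ℚ) :
    nabla ℓ f i x = (Δ_[(ℓ : ℚ)])^[i] f.eval (x - i * ℓ) := by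
  rw [fwdDiff_iter_eq_sum_shift, nabla, ← sum_range_reflect]
  refine sum_congr rfl fun j hj => ?_
  have hji : j ≤ i := Nat.lt_succ_iff.mp (mem_range.mp hj)
  rw [Nat.add_sub_cancel, Nat.choose_symm hji, zsmul_eq_mul, nsmul_eq_mul, Nat.cast_sub hji]
  push_cast
  ring_nf

theorem nabla_of_natDegree_le (ℓ : ℕ) {f : ℚ[X]} {m : ℕ} (hf : f.natDegree ≤ m) (x : ℚ) :
    nabla ℓ f m x = m ! * ℓ ^ m * f.coeff m := by
  rw [nabla_eq_fwdDiff_iter, fwdDiff_iter_eval_of_natDegree_le hf]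

theorem sum_range_neg_one_pow_mul_choose_mul_choose_sub_mul {n ℓ a : ℕ} (h : n * ℓ ≤ a) :
    ∑ j ∈ range (n + 1), (-1 : ℚ) ^ j * n.choose j * (a - j * ℓ).choose n = ℓ ^ n := by
  have hnabla := nabla_of_natDegree_le ℓ (descPochhammer_natDegree ℚ n).le a
  have hcoeff : (descPochhammer ℚ n).coeff n = 1 := by
    simpa using (monic_descPochhammer ℚ n).coeff_natDegree
  rw [hcoeff, mul_one, nabla] at hnabla
  have hterm : ∀ j ∈ range (n + 1), (-1 : ℚ) ^ j * n.choose j * (descPochhammer ℚ n).eval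
      ((a : ℚ) - j * ℓ) = n ! * ((-1 : ℚ) ^ j * n.choose j * (a - j * ℓ).choose n) := by
    intro j hj
    have hjℓ : j * ℓ ≤ a :=
      (Nat.mul_le_mul_right ℓ (Nat.lt_succ_iff.mp (mem_range.mp hj))).trans h
    rw [← Nat.cast_mul, ← Nat.cast_sub hjℓ, descPochhammer_eval_eq_descFactorial,
      Nat.descFactorial_eq_factorial_mul_choose]
    push_cast
    ring
  rw [sum_congr rfl hterm, ← mul_sum] at hnabla
  exact mul_left_cancel₀ (by positivity) hnabla

theorem sum_Icc_neg_one_pow_pred_mul_choose_mul_choose_sub_mul {n ℓ a : ℕ} (h : n * ℓ ≤ a) :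
    ∑ j ∈ Icc 1 n, (-1 : ℚ) ^ (j - 1) * n.choose j * (a - j * ℓ).choose n
      = a.choose n - ℓ ^ n := by
  rw [← sum_range_neg_one_pow_mul_choose_mul_choose_sub_mul h, sum_range_succ',
    ← Ico_add_one_right_eq_Icc, sum_Ico_eq_sum_range, Nat.add_sub_cancel]
  simp only [add_comm 1, Nat.add_sub_cancel, pow_succ, mul_neg_one, neg_mul, sum_neg_distrib,
    pow_zero, Nat.choose_zero_right, zero_mul, Nat.sub_zero, Nat.cast_one, one_mul]
  ring

theorem stmt_14_general (n ℓ : ℕ) (hn : 1 ≤ n)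
    (S T U V : Polynomial ℚ)
    (hS : S.natDegree ≤ n - 1) (hT : T.natDegree ≤ n - 1)
    (hU : U.natDegree ≤ n - 1) (hV : V.natDegree ≤ n - 1)
    (hcoef : (n.factorial : ℚ) * ((n : ℚ) * S.coeff (n - 1) + U.coeff (n - 1)) = 1)
    (d : ℕ) (hd : ℓ * n + 1 ≤ d) :
    (∑ j ∈ Finset.Icc 1 n,
        (-1 : ℚ) ^ (j - 1) * (n.choose j : ℚ) * ((n + d - j * ℓ).choose n : ℚ))
      + (n : ℚ) ^ 2 * (ℓ : ℚ) * nabla ℓ S (n - 1) ((d : ℚ) - (ℓ : ℚ))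
      + (n : ℚ) * (ℓ : ℚ) * nabla ℓ U (n - 1) ((d : ℚ) - (ℓ : ℚ))
      + ((d : ℚ) * (n : ℚ) + 1) * nabla ℓ S n (d : ℚ)
      + nabla ℓ T n (d : ℚ)
      + ((d : ℚ) + 1) * nabla ℓ U n (d : ℚ)
      + ((n : ℚ) + 1) * nabla ℓ V n (d : ℚ)
    = ((n + d).choose n : ℚ) := by
  obtain ⟨k, rfl⟩ : ∃ k, n = k + 1 := ⟨n - 1, by omega⟩
  have hvanish : ∀ f : ℚ[X], f.natDegree ≤ k → nabla ℓ f (k + 1) d = 0 := fun f hf => by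
    rw [nabla_of_natDegree_le ℓ (hf.trans k.le_succ), coeff_eq_zero_of_natDegree_lt
      (Nat.lt_succ_of_le hf), mul_zero]
  rw [Nat.add_sub_cancel] at hS hT hU hV hcoef ⊢
  rw [sum_Icc_neg_one_pow_pred_mul_choose_mul_choose_sub_mul (by linarith),
    hvanish S hS, hvanish T hT, hvanish U hU, hvanish V hV,
    nabla_of_natDegree_le ℓ hS, nabla_of_natDegree_le ℓ hU]
  rw [Nat.factorial_succ] at hcoef
  push_cast at hcoef ⊢
  linear_combination (ℓ : ℚ) ^ (k + 1) * hcoef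

/-- If `S, T, U, V ∈ ℚ[X]` have degree at most `n − 1` and
`n!·(n·s_{n−1} + u_{n−1}) = 1`, then for every `d ≥ ℓn + 1` the quantity `a_n(d)`
equals `C(n + d, n)`. -/
theorem stmt_14 (n ℓ : ℕ) (hn : 1 ≤ n) (hℓ : 1 ≤ ℓ)
    (S T U V : Polynomial ℚ)
    (hS : S.natDegree ≤ n - 1) (hT : T.natDegree ≤ n - 1)
    (hU : U.natDegree ≤ n - 1) (hV : V.natDegree ≤ n - 1)
    (hcoef : (n.factorial : ℚ) * ((n : ℚ) * S.coeff (n - 1) + U.coeff (n - 1)) = 1)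
    (d : ℕ) (hd : ℓ * n + 1 ≤ d) :
    (∑ j ∈ Finset.Icc 1 n,
        (-1 : ℚ) ^ (j - 1) * (n.choose j : ℚ) * ((n + d - j * ℓ).choose n : ℚ))
      + (n : ℚ) ^ 2 * (ℓ : ℚ) * nabla ℓ S (n - 1) ((d : ℚ) - (ℓ : ℚ))
      + (n : ℚ) * (ℓ : ℚ) * nabla ℓ U (n - 1) ((d : ℚ) - (ℓ : ℚ))
      + ((d : ℚ) * (n : ℚ) + 1) * nabla ℓ S n (d : ℚ)
      + nabla ℓ T n (d : ℚ)
      + ((d : ℚ) + 1) * nabla ℓ U n (d : ℚ)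
      + ((n : ℚ) + 1) * nabla ℓ V n (d : ℚ)
    = ((n + d).choose n : ℚ) :=
  stmt_14_general n ℓ hn S T U V hS hT hU hV hcoef d hd
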